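/- Let R be a unique factorization domain whose fraction field L has characteristic different from two, let a₁, a₂ ∈ R, and suppose fᵢ = xᵢ² − aᵢ is irreducible in L[xᵢ] for i = 1, 2, and that T = R[x₁,x₂]/(f₁, f₂) is an integral domain. Then T is a free R-module of rank four, and consequently for any surjective R-algebra homomorphism T → S onto a ring S containing R with the composite R → T → S equal to the inclusion, the extension R ⊆ S is isomorphic to R ⊆ T and splits. -/

import Mathlib

open MvPolynomial

noncomputable section

/-- `T = R[x₁,x₂]/(x₁² − a₁, x₂² − a₂)`. -/
abbrev radQuadQuot (R : Type) [CommRing R] (a₁ a₂ : R) : Type :=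
  MvPolynomial (Fin 2) R ⧸
    (Ideal.span {(X 0 : MvPolynomial (Fin 2) R) ^ 2 - C a₁,
      (X 1 : MvPolynomial (Fin 2) R) ^ 2 - C a₂} : Ideal (MvPolynomial (Fin 2) R))

/-!
Adjoining the two roots one at a time identifies `R[x₁,x₂]/(p(x₁), q(x₂))`, for monic `p` and
`q`, with the tower `(R[x]/(p))[y]/(q)`. Multiplying the two power bases gives an `R`-basis that
contains `1` (for `x² - a₁`, `x² - a₂` it is `1, x₁, x₂, x₁x₂`), so the extension is free of rank
`deg p · deg q` and the `1`-coordinate splits it. Being finite, it is integral over `R`; if it is a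
domain, every nonzero ideal contracts to a nonzero ideal of `R`, so a surjection onto a ring
containing `R` has zero kernel.
-/

theorem AlgHom.injective_of_isIntegral_of_injective_algebraMap {R T S : Type*} [CommRing R]
    [CommRing T] [IsDomain T] [Algebra R T] [Algebra.IsIntegral R T] [CommRing S] [Algebra R S]
    (φ : T →ₐ[R] S) (h : Function.Injective (algebraMap R S)) : Function.Injective φ := by
  have : Nontrivial R := (algebraMap R T).domain_nontrivial
  refine (RingHom.injective_iff_ker_eq_bot (φ : T →+* S)).2
    (Ideal.eq_bot_of_comap_eq_bot (R := R) ?_)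
  rw [RingHom.comap_ker, φ.comp_algebraMap]
  exact (RingHom.injective_iff_ker_eq_bot _).1 h

theorem Ideal.Quotient.aeval_mk_eq_zero {R A : Type*} [CommRing R] [CommRing A] [Algebra R A]
    {I : Ideal A} {x : A} {f : Polynomial R} (h : Polynomial.aeval x f ∈ I) :
    Polynomial.aeval (Ideal.Quotient.mk I x) f = 0 := by
  rwa [← Ideal.Quotient.mkₐ_eq_mk R, Polynomial.aeval_algHom_apply, Ideal.Quotient.mkₐ_eq_mk,
    Ideal.Quotient.eq_zero_iff_mem]

section

variable {R : Type*} [CommRing R] (p q : Polynomial R)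

abbrev AdjoinTwoRoots : Type _ :=
  MvPolynomial (Fin 2) R ⧸ Ideal.span
    {Polynomial.aeval (X 0 : MvPolynomial (Fin 2) R) p, Polynomial.aeval (X 1) q}

abbrev IteratedAdjoinRoot : Type _ :=
  AdjoinRoot (q.map (algebraMap R (AdjoinRoot p)))

namespace AdjoinTwoRoots

def toIteratedAdjoinRoot : AdjoinTwoRoots p q →ₐ[R] IteratedAdjoinRoot p q :=
  Ideal.Quotient.liftₐ _
    (aeval ![algebraMap (AdjoinRoot p) (IteratedAdjoinRoot p q) (AdjoinRoot.root p),
      AdjoinRoot.root _])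
    fun x hx => by
      refine Ideal.span_le (I := RingHom.ker _).2 ?_ hx
      rintro _ (rfl | rfl) <;>
        rw [SetLike.mem_coe, RingHom.mem_ker, ← Polynomial.aeval_algHom_apply, aeval_X]
      · rw [Matrix.cons_val_zero, Polynomial.aeval_algebraMap_apply, AdjoinRoot.aeval_eq,
          AdjoinRoot.mk_self, map_zero]
      · rw [Matrix.cons_val_one, Matrix.cons_val_zero,
          ← Polynomial.aeval_map_algebraMap (AdjoinRoot p), AdjoinRoot.aeval_eq,
          AdjoinRoot.mk_self]

def ofAdjoinRoot : AdjoinRoot p →ₐ[R] AdjoinTwoRoots p q :=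
  AdjoinRoot.liftAlgHom p (Algebra.ofId R _) (Ideal.Quotient.mk _ (X 0))
    (Ideal.Quotient.aeval_mk_eq_zero (Ideal.subset_span (by simp)))

def ofIteratedAdjoinRoot : IteratedAdjoinRoot p q →ₐ[R] AdjoinTwoRoots p q :=
  AdjoinRoot.liftAlgHom _ (ofAdjoinRoot p q) (Ideal.Quotient.mk _ (X 1)) <| by
    rw [Polynomial.eval₂_map, AlgHom.comp_algebraMap, ← Polynomial.aeval_def]
    exact Ideal.Quotient.aeval_mk_eq_zero (Ideal.subset_span (by simp))

@[simp]
theorem toIteratedAdjoinRoot_mk_X_zero :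
    toIteratedAdjoinRoot p q (Ideal.Quotient.mk _ (X 0)) =
      algebraMap (AdjoinRoot p) (IteratedAdjoinRoot p q) (AdjoinRoot.root p) :=
  aeval_X _ 0

@[simp]
theorem toIteratedAdjoinRoot_mk_X_one :
    toIteratedAdjoinRoot p q (Ideal.Quotient.mk _ (X 1)) = AdjoinRoot.root _ :=
  aeval_X _ 1

@[simp]
theorem ofIteratedAdjoinRoot_algebraMap (a : AdjoinRoot p) :
    ofIteratedAdjoinRoot p q (algebraMap _ _ a) = ofAdjoinRoot p q a :=
  AdjoinRoot.liftAlgHom_of _ _ _ _ a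

@[simp]
theorem ofIteratedAdjoinRoot_root :
    ofIteratedAdjoinRoot p q (AdjoinRoot.root _) = Ideal.Quotient.mk _ (X 1) :=
  AdjoinRoot.liftAlgHom_root _ _ _ _

@[simp]
theorem ofAdjoinRoot_root : ofAdjoinRoot p q (AdjoinRoot.root p) = Ideal.Quotient.mk _ (X 0) :=
  AdjoinRoot.liftAlgHom_root _ _ _ _

def equivIteratedAdjoinRoot : AdjoinTwoRoots p q ≃ₐ[R] IteratedAdjoinRoot p q :=
  AlgEquiv.ofAlgHom (toIteratedAdjoinRoot p q) (ofIteratedAdjoinRoot p q)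
    (by ext <;> simp [← AdjoinRoot.algebraMap_eq])
    -- `AdjoinRoot.algebraMap_eq` would rewrite `algebraMap` to `AdjoinRoot.of`, out of reach of
    -- the `@[simp]` lemmas above.
    (Ideal.Quotient.algHom_ext R <| MvPolynomial.algHom_ext <| Fin.forall_fin_two.2
      ⟨by simp [-AdjoinRoot.algebraMap_eq], by simp [-AdjoinRoot.algebraMap_eq]⟩)

theorem nontrivial_iteratedAdjoinRoot [Nontrivial (AdjoinTwoRoots p q)] :
    Nontrivial (IteratedAdjoinRoot p q) :=
  (equivIteratedAdjoinRoot p q).symm.toEquiv.nontrivial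

theorem nontrivial_adjoinRoot [Nontrivial (AdjoinTwoRoots p q)] : Nontrivial (AdjoinRoot p) :=
  have := nontrivial_iteratedAdjoinRoot p q
  (algebraMap (AdjoinRoot p) (IteratedAdjoinRoot p q)).domain_nontrivial

variable {p q}

def basis (hp : p.Monic) (hq : q.Monic) :
    Module.Basis (Fin (AdjoinRoot.powerBasis' hp).dim × Fin (AdjoinRoot.powerBasis' (hq.map
      (algebraMap R (AdjoinRoot p)))).dim) R (AdjoinTwoRoots p q) :=
  ((AdjoinRoot.powerBasis' hp).basis.smulTower (AdjoinRoot.powerBasis' (hq.map _)).basis).map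
    (equivIteratedAdjoinRoot p q).symm.toLinearEquiv

theorem finrank_eq [Nontrivial (AdjoinTwoRoots p q)] (hp : p.Monic) (hq : q.Monic) :
    Module.finrank R (AdjoinTwoRoots p q) = p.natDegree * q.natDegree := by
  have := nontrivial_adjoinRoot p q
  have : Nontrivial R := (algebraMap R (AdjoinRoot p)).domain_nontrivial
  rw [Module.finrank_eq_card_basis (basis hp hq), Fintype.card_prod, Fintype.card_fin,
    Fintype.card_fin, AdjoinRoot.powerBasis'_dim, AdjoinRoot.powerBasis'_dim, hq.natDegree_map]

theorem exists_basis_eq_one [Nontrivial (AdjoinTwoRoots p q)] (hp : p.Monic) (hq : q.Monic) :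
    ∃ i, basis hp hq i = 1 := by
  have := nontrivial_adjoinRoot p q
  have := nontrivial_iteratedAdjoinRoot p q
  refine ⟨(⟨0, (AdjoinRoot.powerBasis' hp).dim_pos⟩,
    ⟨0, (AdjoinRoot.powerBasis' (hq.map _)).dim_pos⟩), ?_⟩
  rw [basis, Module.Basis.map_apply, Module.Basis.smulTower_apply, PowerBasis.basis_eq_pow,
    PowerBasis.basis_eq_pow, pow_zero, pow_zero, one_smul]
  exact map_one (equivIteratedAdjoinRoot p q).symm

end AdjoinTwoRoots

end

def radQuadQuotEquiv (R : Type) [CommRing R] (a₁ a₂ : R) :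
    radQuadQuot R a₁ a₂ ≃ₐ[R]
      AdjoinTwoRoots (Polynomial.X ^ 2 - Polynomial.C a₁) (Polynomial.X ^ 2 - Polynomial.C a₂) :=
  Ideal.quotientEquivAlgOfEq R (by simp [MvPolynomial.algebraMap_eq])

theorem stmt16_general (R : Type) [CommRing R]
    (a₁ a₂ : R)
    (hT : IsDomain (radQuadQuot R a₁ a₂)) :
    Module.Free R (radQuadQuot R a₁ a₂) ∧
    Module.finrank R (radQuadQuot R a₁ a₂) = 4 ∧
    ∀ (S : Type) [CommRing S] [Algebra R S],
      Function.Injective (algebraMap R S) →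
      ∀ φ : radQuadQuot R a₁ a₂ →ₐ[R] S, Function.Surjective φ →
        Function.Bijective φ ∧ ∃ ρ : S →ₗ[R] R, ρ 1 = 1 := by
  have hp := Polynomial.monic_X_pow_sub_C a₁ two_ne_zero
  have hq := Polynomial.monic_X_pow_sub_C a₂ two_ne_zero
  let e := radQuadQuotEquiv R a₁ a₂
  have : Nontrivial (AdjoinTwoRoots _ _) := e.symm.toEquiv.nontrivial
  have : Nontrivial R := (algebraMap R (radQuadQuot R a₁ a₂)).domain_nontrivial
  let b := (AdjoinTwoRoots.basis hp hq).map e.symm.toLinearEquiv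
  have : Module.Finite R (radQuadQuot R a₁ a₂) := .of_basis b
  have := Algebra.IsIntegral.of_finite R (radQuadQuot R a₁ a₂)
  refine ⟨.of_basis b, ?_, fun S _ _ hinj φ hφ => ?_⟩
  · rw [e.toLinearEquiv.finrank_eq, AdjoinTwoRoots.finrank_eq hp hq,
      Polynomial.natDegree_X_pow_sub_C, Polynomial.natDegree_X_pow_sub_C]
  have hbij : Function.Bijective φ :=
    ⟨φ.injective_of_isIntegral_of_injective_algebraMap hinj, hφ⟩
  obtain ⟨i, hi⟩ := AdjoinTwoRoots.exists_basis_eq_one hp hq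
  let bS := b.map (LinearEquiv.ofBijective φ.toLinearMap hbij)
  have hbS : bS i = 1 := by
    rw [Module.Basis.map_apply, Module.Basis.map_apply, hi]
    exact (φ.comp e.symm.toAlgHom).map_one
  refine ⟨hbij, bS.coord i, ?_⟩
  rw [← hbS, Module.Basis.coord_apply, Module.Basis.repr_self, Finsupp.single_eq_same]

/-- Let `R` be a UFD whose fraction field `L` has characteristic `≠ 2`, let
`a₁, a₂ ∈ R` with `fᵢ = xᵢ² − aᵢ` irreducible in `L[xᵢ]`, and suppose
`T = R[x₁,x₂]/(f₁, f₂)` is an integral domain.  Then `T` is a free `R`-module of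
rank four, and for any surjective `R`-algebra homomorphism `T → S` onto a ring `S`
containing `R` (with composite `R → T → S` the inclusion), the extension `R ⊆ S` is
isomorphic to `R ⊆ T` and splits. -/
theorem stmt16 (R L : Type) [CommRing R] [IsDomain R] [UniqueFactorizationMonoid R]
    [Field L] [Algebra R L] [IsFractionRing R L] (hchar : ringChar L ≠ 2)
    (a₁ a₂ : R)
    (h₁ : Irreducible (Polynomial.X ^ 2 - Polynomial.C (algebraMap R L a₁) :
      Polynomial L))
    (h₂ : Irreducible (Polynomial.X ^ 2 - Polynomial.C (algebraMap R L a₂) :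
      Polynomial L))
    (hT : IsDomain (radQuadQuot R a₁ a₂)) :
    Module.Free R (radQuadQuot R a₁ a₂) ∧
    Module.finrank R (radQuadQuot R a₁ a₂) = 4 ∧
    ∀ (S : Type) [CommRing S] [Algebra R S],
      Function.Injective (algebraMap R S) →
      ∀ φ : radQuadQuot R a₁ a₂ →ₐ[R] S, Function.Surjective φ →
        Function.Bijective φ ∧ ∃ ρ : S →ₗ[R] R, ρ 1 = 1 :=
  stmt16_general R a₁ a₂ hT
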